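/- arXiv:2112.01182 — 9 statements merged into one kernel-verified Lean document; each statement's English description precedes it below -/
import Mathlib

section
/- (Proposition 1, stationarity part.) The distribution π is stationary for the transition function q: for every n₂ ∈ ℕ, Σ'_{n₁ ∈ ℕ} π n₁ · q n₁ n₂ = π n₂. -/
/-!
`π` factors as a geometric law in the block index `w / M` times a truncated geometric law in
the phase `w % M`, so it has total mass `1`. A state `n₂ < M` is entered from every state with
the same probability, which is therefore its whole inflow; a state `n₂ ≥ M` is entered only from
`n₂ - M`, with probability `1 - ξ`, and moving up one block multiplies `π` by exactly `1 - ξ`.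
-/

open Finset

theorem hasSum_div_mul_mod {α : Type*} [NonUnitalNonAssocSemiring α] [TopologicalSpace α]
    [IsTopologicalSemiring α] {f : ℕ → α} {a : α} (hf : HasSum f a) (g : ℕ → α) {M : ℕ}
    (hM : 0 < M) :
    HasSum (fun w => f (w / M) * g (w % M)) (a * ∑ r ∈ range M, g r) := by
  have hblock : ∀ r ∈ range M,
      HasSum (fun w => if w % M = r then f (w / M) * g r else 0) (a * g r) := by
    intro r hr
    have hr : r < M := mem_range.mp hr
    have hinj : Function.Injective (fun k => M * k + r) := fun k l h => by
      simpa [hM.ne'] using h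
    rw [← hinj.hasSum_iff]
    · convert hf.mul_right (g r) using 2 with k
      simp [Nat.mul_add_div hM, Nat.mod_eq_of_lt hr, Nat.div_eq_of_lt hr]
    · rintro w hw
      rw [if_neg]
      rintro rfl
      exact hw ⟨w / M, Nat.div_add_mod w M⟩
  rw [mul_sum]
  convert hasSum_sum hblock using 2 with w
  rw [sum_ite_eq, if_pos (mem_range.mpr (Nat.mod_lt w hM))]

theorem hasSum_mul_one_sub_pow {p : ℝ} (hp₀ : 0 < p) (hp₁ : p ≤ 1) :
    HasSum (fun k => p * (1 - p) ^ k) 1 := by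
  have := (hasSum_geometric_of_lt_one (sub_nonneg.mpr hp₁) (sub_lt_self 1 hp₀)).mul_left p
  rwa [sub_sub_cancel, mul_inv_cancel₀ hp₀.ne'] at this

theorem sum_range_mul_one_sub_pow (μ : ℝ) (M : ℕ) :
    ∑ r ∈ range M, μ * (1 - μ) ^ r = 1 - (1 - μ) ^ M := by
  rw [← mul_sum, ← mul_neg_geom_sum, sub_sub_cancel]

theorem hasSum_geometric_div_mul_mod {ξ : ℝ} (hξ₀ : 0 < ξ) (hξ₁ : ξ ≤ 1) (μ : ℝ) {M : ℕ}
    (hM : 0 < M) :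
    HasSum (fun w => ξ * (1 - ξ) ^ (w / M) * (μ * (1 - μ) ^ (w % M))) (1 - (1 - μ) ^ M) := by
  simpa [sum_range_mul_one_sub_pow] using
    hasSum_div_mul_mod (hasSum_mul_one_sub_pow hξ₀ hξ₁) (fun r => μ * (1 - μ) ^ r) hM

theorem one_sub_one_sub_pow_pos {μ : ℝ} (hμ₀ : 0 < μ) (hμ₁ : μ ≤ 1) {M : ℕ} (hM : M ≠ 0) :
    0 < 1 - (1 - μ) ^ M :=
  sub_pos.mpr (pow_lt_one₀ (sub_nonneg.mpr hμ₁) (sub_lt_self 1 hμ₀) hM)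

/-- Proposition 1, stationarity part: `π` is stationary for `q`. -/
theorem stmt_2 (M : ℕ) (hM : 1 ≤ M) (μ ξ : ℝ)
    (hμ : μ ∈ Set.Ioo (0 : ℝ) 1) (hξ : ξ ∈ Set.Ioo (0 : ℝ) 1)
    (σ : ℝ) (hσ : σ = 1 - (1 - μ) ^ M)
    (q : ℕ → ℕ → ℝ)
    (hq : ∀ n₁ n₂, q n₁ n₂ =
      if n₂ ≤ M - 1 then ξ * μ * (1 - μ) ^ n₂ / σ
      else if n₂ = n₁ + M then 1 - ξ else 0)
    (π : ℕ → ℝ)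
    (hπ : ∀ w, π w = ξ * (1 - ξ) ^ (w / M) * μ * (1 - μ) ^ (w % M) / σ) :
    ∀ n₂ : ℕ, ∑' n₁ : ℕ, π n₁ * q n₁ n₂ = π n₂ := by
  have hσ₀ : σ ≠ 0 := hσ ▸ (one_sub_one_sub_pow_pos hμ.1 hμ.2.le (by omega)).ne'
  have hπ_mass : ∑' w, π w = 1 := by
    have := (hasSum_geometric_div_mul_mod hξ.1 hξ.2.le μ hM).div_const σ
    rw [← hσ, div_self hσ₀] at this
    simpa only [hπ, mul_assoc] using this.tsum_eq
  intro n₂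
  by_cases hn : n₂ ≤ M - 1
  · have hlt : n₂ < M := by omega
    simp only [hq, if_pos hn]
    rw [tsum_mul_right, hπ_mass, one_mul, hπ, Nat.div_eq_of_lt hlt, Nat.mod_eq_of_lt hlt]
    ring
  · obtain ⟨k, rfl⟩ : ∃ k, n₂ = k + M := ⟨n₂ - M, by omega⟩
    rw [tsum_eq_single k fun n₁ hne => by rw [hq, if_neg hn, if_neg (by omega), mul_zero],
      hq, if_neg hn, if_pos rfl, hπ, hπ, Nat.add_div_right _ (by omega), Nat.add_mod_right,
      pow_succ]
    ring
end

section
/- The per-frame AoI chain is irreducible: for all states n₁, n₂ ∈ ℕ there exists j ≥ 1 such that Q j n₁ n₂ > 0. -/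
/-- The per-frame AoI chain is irreducible: for all states `n₁, n₂` there
exists `j ≥ 1` such that `Q j n₁ n₂ > 0`. -/
theorem stmt_4 (M : ℕ) (hM : 1 ≤ M) (μ ξ : ℝ)
    (hμ : μ ∈ Set.Ioo (0 : ℝ) 1) (hξ : ξ ∈ Set.Ioo (0 : ℝ) 1)
    (σ : ℝ) (hσ : σ = 1 - (1 - μ) ^ M)
    (q : ℕ → ℕ → ℝ)
    (hq : ∀ n₁ n₂, q n₁ n₂ =
      if n₂ ≤ M - 1 then ξ * μ * (1 - μ) ^ n₂ / σ
      else if n₂ = n₁ + M then 1 - ξ else 0)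
    (Q : ℕ → ℕ → ℕ → ℝ)
    (hQ0 : ∀ a c, Q 0 a c = if a = c then 1 else 0)
    (hQs : ∀ j a c, Q (j + 1) a c = ∑' b : ℕ, Q j a b * q b c) :
    ∀ n₁ n₂ : ℕ, ∃ j : ℕ, 1 ≤ j ∧ 0 < Q j n₁ n₂ := by
  obtain ⟨hμ0, hμ1⟩ := hμ
  obtain ⟨hξ0, hξ1⟩ := hξ
  have hσ0 : 0 < σ := by
    rw [hσ]
    have h1 : (1 - μ) ^ M < 1 := pow_lt_one₀ (by linarith) (by linarith) (by omega)
    linarith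
  have hqpos : ∀ b c, (c ≤ M - 1 ∨ c = b + M) → 0 < q b c := by
    intro b c hc
    rw [hq]
    by_cases h : c ≤ M - 1
    · simp only [h, if_true]
      have : (0:ℝ) < (1 - μ) ^ c := pow_pos (by linarith) c
      positivity
    · rcases hc with h' | h'
      · exact absurd h' h
      · rw [if_neg h, if_pos h']; linarith
  have hqnn : ∀ b c, 0 ≤ q b c := by
    intro b c
    rw [hq]
    split_ifs
    · have : (0:ℝ) < (1 - μ) ^ c := pow_pos (by linarith) c
      positivity
    · linarith
    · exact le_refl 0
  have hQnn : ∀ j a c, 0 ≤ Q j a c := by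
    intro j
    induction j with
    | zero => intro a c; rw [hQ0]; split_ifs <;> norm_num
    | succ j ih =>
      intro a c
      rw [hQs]
      exact tsum_nonneg fun b => mul_nonneg (ih a b) (hqnn b c)
  have hfin : ∀ j a, (Function.support (Q j a)).Finite := by
    intro j
    induction j with
    | zero =>
      intro a
      apply Set.Finite.subset (Set.finite_singleton a)
      intro c hc
      rw [Function.mem_support, hQ0] at hc
      by_contra h
      simp at h
      simp [Ne.symm h] at hc
    | succ j ih =>
      intro a
      apply Set.Finite.subset ((Set.finite_Iic (M - 1)).union ((ih a).image (fun b => b + M)))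
      intro c hc
      rw [Function.mem_support, hQs] at hc
      have hb : ∃ b, Q j a b * q b c ≠ 0 := by
        by_contra h
        push_neg at h
        apply hc
        simp only [h]
        exact tsum_zero
      obtain ⟨b, hb⟩ := hb
      have hQb : Q j a b ≠ 0 := fun h => hb (by simp [h])
      have hqb : q b c ≠ 0 := fun h => hb (by simp [h])
      rw [hq] at hqb
      by_cases h1 : c ≤ M - 1
      · exact Or.inl h1
      · simp only [h1, if_false] at hqb
        by_cases h2 : c = b + M
        · exact Or.inr ⟨b, hQb, h2.symm⟩
        · simp [h2] at hqb
  have hsum : ∀ j a c, Summable (fun b => Q j a b * q b c) := by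
    intro j a c
    apply summable_of_ne_finset_zero (s := (hfin j a).toFinset)
    intro b hb
    have : Q j a b = 0 := by
      by_contra h
      exact hb ((hfin j a).mem_toFinset.mpr h)
    simp [this]
  have hstep : ∀ j a b c, Q j a b * q b c ≤ Q (j + 1) a c := by
    intro j a b c
    rw [hQs]
    exact Summable.le_tsum (hsum j a c) b fun b' _ => mul_nonneg (hQnn j a b') (hqnn b' c)
  intro n₁ n₂
  set r := n₂ % M with hr
  have hrM : r ≤ M - 1 := by
    have := Nat.mod_lt n₂ (show 0 < M by omega)
    omega
  have hbase : 0 < Q 1 n₁ r := by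
    have h1 : Q 0 n₁ n₁ * q n₁ r ≤ Q 1 n₁ r := hstep 0 n₁ n₁ r
    have h2 : Q 0 n₁ n₁ = 1 := by rw [hQ0]; simp
    rw [h2, one_mul] at h1
    exact lt_of_lt_of_le (hqpos n₁ r (Or.inl hrM)) h1
  have key : ∀ k, 0 < Q (1 + k) n₁ (r + k * M) := by
    intro k
    induction k with
    | zero => simpa using hbase
    | succ k ih =>
      have h1 : Q (1 + k) n₁ (r + k * M) * q (r + k * M) (r + (k + 1) * M) ≤
          Q (1 + k + 1) n₁ (r + (k + 1) * M) := hstep (1 + k) n₁ (r + k * M) (r + (k + 1) * M)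
      have h2 : 0 < q (r + k * M) (r + (k + 1) * M) :=
        hqpos _ _ (Or.inr (by ring))
      have h3 := lt_of_lt_of_le (mul_pos ih h2) h1
      have h4 : 1 + k + 1 = 1 + (k + 1) := by omega
      rwa [h4] at h3
  refine ⟨1 + n₂ / M, Nat.le_add_right 1 _, ?_⟩
  have := key (n₂ / M)
  have heq : r + n₂ / M * M = n₂ := Nat.mod_add_div' n₂ M
  rwa [heq] at this
end

section
/- Exact finite-time distribution of the per-frame AoI chain: for every initial state n₀ ∈ ℕ, every j ≥ 1, and every w ∈ ℕ, (i) if ⌊w/M⌋ < j then Q j n₀ w = π w; (ii) Q j n₀ (n₀ + j·M) = (1-ξ)^j; and (iii) if ⌊w/M⌋ ≥ j and w ≠ n₀ + j·M then Q j n₀ w = 0. -/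
/-- Exact finite-time distribution of the per-frame AoI chain. -/
theorem stmt_5 (M : ℕ) (hM : 1 ≤ M) (μ ξ : ℝ)
    (hμ : μ ∈ Set.Ioo (0 : ℝ) 1) (hξ : ξ ∈ Set.Ioo (0 : ℝ) 1)
    (σ : ℝ) (hσ : σ = 1 - (1 - μ) ^ M)
    (q : ℕ → ℕ → ℝ)
    (hq : ∀ n₁ n₂, q n₁ n₂ =
      if n₂ ≤ M - 1 then ξ * μ * (1 - μ) ^ n₂ / σ
      else if n₂ = n₁ + M then 1 - ξ else 0)
    (Q : ℕ → ℕ → ℕ → ℝ)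
    (hQ0 : ∀ a c, Q 0 a c = if a = c then 1 else 0)
    (hQs : ∀ j a c, Q (j + 1) a c = ∑' b : ℕ, Q j a b * q b c)
    (π : ℕ → ℝ)
    (hπ : ∀ w, π w = ξ * (1 - ξ) ^ (w / M) * μ * (1 - μ) ^ (w % M) / σ) :
    ∀ n₀ j : ℕ, 1 ≤ j →
      (∀ w : ℕ, w / M < j → Q j n₀ w = π w) ∧
      Q j n₀ (n₀ + j * M) = (1 - ξ) ^ j ∧
      (∀ w : ℕ, j ≤ w / M → w ≠ n₀ + j * M → Q j n₀ w = 0) := by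
  obtain ⟨hμ0, hμ1⟩ := hμ
  obtain ⟨hξ0, hξ1⟩ := hξ
  have hM0 : 0 < M := hM
  have hpow : (1 - μ) ^ M < 1 := pow_lt_one₀ (by linarith) (by linarith) (by omega)
  have hσ0 : 0 < σ := by rw [hσ]; linarith
  have hσne : σ ≠ 0 := ne_of_gt hσ0
  have hμne : (1 - μ) ≠ 1 := by linarith
  -- block sum of π over one frame
  have hblock : ∀ k : ℕ, ∑ r ∈ Finset.range M, π (k * M + r) = ξ * (1 - ξ) ^ k := by
    intro k
    have h1 : ∀ r ∈ Finset.range M,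
        π (k * M + r) = (ξ * (1 - ξ) ^ k * μ / σ) * (1 - μ) ^ r := by
      intro r hr
      rw [Finset.mem_range] at hr
      have hd : (k * M + r) / M = k := by
        rw [add_comm, Nat.add_mul_div_right _ _ hM0, Nat.div_eq_of_lt hr, zero_add]
      have hm : (k * M + r) % M = r := by
        rw [add_comm, Nat.add_mul_mod_self_right, Nat.mod_eq_of_lt hr]
      rw [hπ, hd, hm]; ring
    rw [Finset.sum_congr rfl h1, ← Finset.mul_sum, geom_sum_eq hμne M, hσ]
    have hμ0' : μ ≠ 0 := ne_of_gt hμ0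
    have hσne' : 1 - (1 - μ) ^ M ≠ 0 := by rw [hσ] at hσne; exact hσne
    field_simp
    ring
  -- partial sums of π
  have hπsum : ∀ j : ℕ, ∑ b ∈ Finset.range (j * M), π b = 1 - (1 - ξ) ^ j := by
    intro j
    induction j with
    | zero => simp
    | succ j ih =>
      have : (j + 1) * M = j * M + M := by ring
      rw [this, Finset.sum_range_add, ih, hblock j, pow_succ]
      ring
  intro n₀
  have key : ∀ j : ℕ,
      (∀ w : ℕ, w / M < j → Q j n₀ w = π w) ∧
      Q j n₀ (n₀ + j * M) = (1 - ξ) ^ j ∧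
      (∀ w : ℕ, j ≤ w / M → w ≠ n₀ + j * M → Q j n₀ w = 0) := by
    intro j
    induction j with
    | zero =>
      refine ⟨fun w hw => absurd hw (Nat.not_lt_zero _), ?_, fun w _ hw => ?_⟩
      · rw [hQ0]; simp
      · rw [hQ0, if_neg (by omega)]
    | succ j ih =>
      obtain ⟨ih1, ih2, ih3⟩ := ih
      set S : Finset ℕ := Finset.range (j * M) ∪ {n₀ + j * M} with hS
      have hsup : ∀ b ∉ S, Q j n₀ b = 0 := by
        intro b hb
        rw [hS, Finset.mem_union, Finset.mem_range, Finset.mem_singleton] at hb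
        push_neg at hb
        exact ih3 b ((Nat.le_div_iff_mul_le hM0).2 (by omega)) hb.2
      have hrow : ∀ c, Q (j + 1) n₀ c = ∑ b ∈ S, Q j n₀ b * q b c := by
        intro c
        rw [hQs]
        exact tsum_eq_sum (fun b hb => by rw [hsup b hb, zero_mul])
      have hmass : ∑ b ∈ S, Q j n₀ b = 1 := by
        have hdisj : Disjoint (Finset.range (j * M)) ({n₀ + j * M} : Finset ℕ) := by
          rw [Finset.disjoint_singleton_right, Finset.mem_range]; omega
        rw [hS, Finset.sum_union hdisj, Finset.sum_singleton, ih2]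
        have : ∑ b ∈ Finset.range (j * M), Q j n₀ b
            = ∑ b ∈ Finset.range (j * M), π b := by
          refine Finset.sum_congr rfl fun b hb => ?_
          rw [Finset.mem_range] at hb
          exact ih1 b ((Nat.div_lt_iff_lt_mul hM0).2 hb)
        rw [this, hπsum j]
        ring
      have hstep1 : ∀ c, M ≤ c → Q (j + 1) n₀ c = Q j n₀ (c - M) * (1 - ξ) := by
        intro c hc
        rw [hQs, tsum_eq_single (c - M)]
        · rw [hq, if_neg (by omega), if_pos (by omega)]
        · intro b hb
          rw [hq, if_neg (by omega), if_neg (by omega), mul_zero]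
      have hdm : ∀ c, M ≤ c → (c - M) / M + 1 = c / M ∧ (c - M) % M = c % M := by
        intro c hc
        constructor
        · have := Nat.add_div_right (c - M) hM0
          rw [Nat.sub_add_cancel hc] at this
          omega
        · have := Nat.add_mod_right (c - M) M
          rw [Nat.sub_add_cancel hc] at this
          omega
      refine ⟨fun w hw => ?_, ?_, fun w hw1 hw2 => ?_⟩
      · -- part (i)
        by_cases hwM : w < M
        · rw [hrow w]
          have hq' : ∀ b ∈ S, Q j n₀ b * q b w
              = Q j n₀ b * (ξ * μ * (1 - μ) ^ w / σ) := by
            intro b _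
            rw [hq, if_pos (by omega)]
          rw [Finset.sum_congr rfl hq', ← Finset.sum_mul, hmass, one_mul, hπ,
            Nat.div_eq_of_lt hwM, Nat.mod_eq_of_lt hwM]
          ring
        · push_neg at hwM
          obtain ⟨hd, hm⟩ := hdm w hwM
          rw [hstep1 w hwM, ih1 (w - M) (by omega), hπ, hπ, ← hd, hm, pow_succ]
          ring
      · -- part (ii)
        have hc : M ≤ n₀ + (j + 1) * M := by nlinarith
        have he : n₀ + (j + 1) * M - M = n₀ + j * M := by
          have : (j + 1) * M = j * M + M := by ring
          omega
        rw [hstep1 _ hc, he, ih2, pow_succ]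
      · -- part (iii)
        have hwM : M ≤ w := by
          have := (Nat.le_div_iff_mul_le hM0).1 hw1
          nlinarith
        obtain ⟨hd, hm⟩ := hdm w hwM
        have hne : w - M ≠ n₀ + j * M := by
          intro h
          apply hw2
          have : (j + 1) * M = j * M + M := by ring
          omega
        rw [hstep1 w hwM, ih3 (w - M) (by omega) hne, zero_mul]
  intro j _
  exact key j
end

section
/- (Proposition 1.) The per-frame AoI chain is ergodic with steady-state distribution π: for every initial state n₀ ∈ ℕ and every w ∈ ℕ, the j-step transition probability Q j n₀ w converges to π w as j → ∞. -/
/-!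
Starting from `a`, after `j` frames the chain has either never been reset, and then sits at
`a + j * M` with probability `(1 - ξ) ^ j`, or its last reset happened at some frame, and then the
law of the current state on `[0, j * M)` is exactly `π`. Hence
`Q j a c = [c = a + j * M] (1 - ξ) ^ j + [c < j * M] π c`, which equals `π c` once `j > c`.
-/

open Finset Filter

namespace AoIFrame

def kernel (M : ℕ) (p : ℝ) (ρ : ℕ → ℝ) (b c : ℕ) : ℝ :=
  if c < M then ρ c else if c = b + M then p else 0

def stationary (M : ℕ) (p : ℝ) (ρ : ℕ → ℝ) (c : ℕ) : ℝ :=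
  p ^ (c / M) * ρ (c % M)

def transition (M : ℕ) (p : ℝ) (ρ : ℕ → ℝ) (j a c : ℕ) : ℝ :=
  (if c = a + j * M then p ^ j else 0) + (if c < j * M then stationary M p ρ c else 0)

variable {M : ℕ} {p : ℝ} {ρ : ℕ → ℝ}

theorem kernel_of_lt {c : ℕ} (hc : c < M) (b : ℕ) : kernel M p ρ b c = ρ c := by
  simp [kernel, hc]

theorem kernel_add_self (b d : ℕ) : kernel M p ρ b (d + M) = if b = d then p else 0 := by
  simp [kernel, eq_comm (a := b)]

theorem stationary_of_lt {c : ℕ} (hc : c < M) : stationary M p ρ c = ρ c := by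
  simp [stationary, Nat.div_eq_of_lt hc, Nat.mod_eq_of_lt hc]

theorem stationary_add_self (hM : 0 < M) (c : ℕ) :
    stationary M p ρ (c + M) = p * stationary M p ρ c := by
  simp only [stationary, Nat.add_div_right c hM, Nat.add_mod_right, pow_succ]
  ring

theorem sum_range_mul_stationary (hM : 0 < M) (hρ : ∑ r ∈ range M, ρ r = 1 - p) (j : ℕ) :
    ∑ b ∈ range (j * M), stationary M p ρ b = 1 - p ^ j := by
  induction j with
  | zero => simp
  | succ j ih =>
    rw [Nat.succ_mul, add_comm, sum_range_add, sum_congr rfl fun r hr =>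
      stationary_of_lt (mem_range.mp hr)]
    simp only [add_comm M, stationary_add_self hM, ← mul_sum, ih, hρ, pow_succ]
    ring

theorem tsum_transition_mul (j a : ℕ) (f : ℕ → ℝ) :
    ∑' b, transition M p ρ j a b * f b =
      p ^ j * f (a + j * M) + ∑ b ∈ range (j * M), stationary M p ρ b * f b := by
  have hsupp : ∀ b ∉ range (a + j * M + 1), transition M p ρ j a b * f b = 0 := by
    intro b hb
    rw [mem_range, not_lt] at hb
    simp [transition, show b ≠ a + j * M by omega, show ¬ b < j * M by omega]
  rw [tsum_eq_sum hsupp]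
  simp only [transition, add_mul, ite_mul, zero_mul, sum_add_distrib, sum_ite_eq',
    mem_range, lt_add_one, if_true]
  rw [← sum_filter]
  congr 1
  refine sum_congr (ext fun b => ?_) fun _ _ => rfl
  simp only [mem_filter, mem_range]
  omega

theorem transition_succ (hM : 0 < M) (hρ : ∑ r ∈ range M, ρ r = 1 - p) (j a c : ℕ) :
    transition M p ρ (j + 1) a c =
      p ^ j * kernel M p ρ (a + j * M) c +
        ∑ b ∈ range (j * M), stationary M p ρ b * kernel M p ρ b c := by
  rcases lt_or_ge c M with hc | hc
  · simp only [kernel_of_lt hc, ← sum_mul, sum_range_mul_stationary hM hρ, transition,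
      stationary_of_lt hc]
    rw [if_neg (by nlinarith), if_pos (by nlinarith)]
    ring
  · obtain ⟨d, rfl⟩ := Nat.exists_eq_add_of_le' hc
    simp only [kernel_add_self, mul_ite, mul_zero, sum_ite_eq', mem_range, transition,
      stationary_add_self hM, Nat.succ_mul, ← add_assoc, add_left_inj, add_lt_add_iff_right,
      pow_succ, eq_comm (a := d)]
    split_ifs <;> ring

theorem eq_transition (hM : 0 < M) (hρ : ∑ r ∈ range M, ρ r = 1 - p)
    {Q : ℕ → ℕ → ℕ → ℝ} (hQ0 : ∀ a c, Q 0 a c = if a = c then 1 else 0)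
    (hQs : ∀ j a c, Q (j + 1) a c = ∑' b, Q j a b * kernel M p ρ b c) :
    ∀ j a c, Q j a c = transition M p ρ j a c := by
  intro j
  induction j with
  | zero => simp [hQ0, transition, eq_comm]
  | succ j ih =>
    intro a c
    simp only [hQs, ih, tsum_transition_mul, transition_succ hM hρ]

theorem transition_of_lt (hM : 0 < M) {j c : ℕ} (hc : c < j) (a : ℕ) :
    transition M p ρ j a c = stationary M p ρ c := by
  have : j ≤ j * M := Nat.le_mul_of_pos_right j hM
  simp [transition, show c ≠ a + j * M by omega, show c < j * M by omega]

end AoIFrame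

theorem stmt_6_general (M : ℕ) (hM : 1 ≤ M) (μ ξ : ℝ)
    (hμ : μ ∈ Set.Ioo (0 : ℝ) 1)
    (σ : ℝ) (hσ : σ = 1 - (1 - μ) ^ M)
    (q : ℕ → ℕ → ℝ)
    (hq : ∀ n₁ n₂, q n₁ n₂ =
      if n₂ ≤ M - 1 then ξ * μ * (1 - μ) ^ n₂ / σ
      else if n₂ = n₁ + M then 1 - ξ else 0)
    (Q : ℕ → ℕ → ℕ → ℝ)
    (hQ0 : ∀ a c, Q 0 a c = if a = c then 1 else 0)
    (hQs : ∀ j a c, Q (j + 1) a c = ∑' b : ℕ, Q j a b * q b c)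
    (π : ℕ → ℝ)
    (hπ : ∀ w, π w = ξ * (1 - ξ) ^ (w / M) * μ * (1 - μ) ^ (w % M) / σ) :
    ∀ n₀ w : ℕ,
      Filter.Tendsto (fun j => Q j n₀ w) Filter.atTop (nhds (π w)) := by
  set ρ : ℕ → ℝ := fun c => ξ * μ * (1 - μ) ^ c / σ
  have hσ0 : σ ≠ 0 := by
    rw [hσ, sub_ne_zero]
    exact (pow_lt_one₀ (by linarith [hμ.2]) (by linarith [hμ.1]) (by omega)).ne'
  have hρ : ∑ r ∈ range M, ρ r = 1 - (1 - ξ) := by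
    have hgeom : μ * ∑ r ∈ range M, (1 - μ) ^ r = σ := by
      rw [hσ, ← mul_neg_geom_sum, sub_sub_cancel]
    calc ∑ r ∈ range M, ρ r = ξ * (μ * ∑ r ∈ range M, (1 - μ) ^ r) / σ := by
          simp only [ρ, mul_sum, sum_div, mul_assoc]
      _ = 1 - (1 - ξ) := by rw [hgeom, mul_div_assoc, div_self hσ0, mul_one, sub_sub_cancel]
  have hqk : q = AoIFrame.kernel M (1 - ξ) ρ := by
    ext b c
    simp only [hq, AoIFrame.kernel, Nat.le_sub_one_iff_lt hM, ρ]
  have hπs : π = AoIFrame.stationary M (1 - ξ) ρ := by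
    ext w
    simp only [hπ, AoIFrame.stationary, ρ]
    ring
  subst hqk hπs
  intro n₀ w
  refine tendsto_atTop_of_eventually_const (i₀ := w + 1) fun j hj => ?_
  rw [AoIFrame.eq_transition hM hρ hQ0 hQs, AoIFrame.transition_of_lt hM hj]

/-- Proposition 1: the per-frame AoI chain is ergodic with steady-state
distribution `π`. -/
theorem stmt_6 (M : ℕ) (hM : 1 ≤ M) (μ ξ : ℝ)
    (hμ : μ ∈ Set.Ioo (0 : ℝ) 1) (hξ : ξ ∈ Set.Ioo (0 : ℝ) 1)
    (σ : ℝ) (hσ : σ = 1 - (1 - μ) ^ M)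
    (q : ℕ → ℕ → ℝ)
    (hq : ∀ n₁ n₂, q n₁ n₂ =
      if n₂ ≤ M - 1 then ξ * μ * (1 - μ) ^ n₂ / σ
      else if n₂ = n₁ + M then 1 - ξ else 0)
    (Q : ℕ → ℕ → ℕ → ℝ)
    (hQ0 : ∀ a c, Q 0 a c = if a = c then 1 else 0)
    (hQs : ∀ j a c, Q (j + 1) a c = ∑' b : ℕ, Q j a b * q b c)
    (π : ℕ → ℝ)
    (hπ : ∀ w, π w = ξ * (1 - ξ) ^ (w / M) * μ * (1 - μ) ^ (w % M) / σ) :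
    ∀ n₀ w : ℕ,
      Filter.Tendsto (fun j => Q j n₀ w) Filter.atTop (nhds (π w)) :=
  stmt_6_general M hM μ ξ hμ σ hσ q hq Q hQ0 hQs π hπ
end

section
/- Closed form for the tails of the steady-state distribution: for every n ∈ ℕ, Σ'_{w ∈ ℕ, w ≥ n} π w = (1-ξ)^{⌊n/M⌋} · (1 - ξ·(1-(1-μ)^{n mod M})/σ). -/
/-!
Write `T n` for the claimed closed form. Then `T n - T (n + 1) = π n`: inside a block of `M`
consecutive states this is a one-term geometric difference, and at the end of a block it is exactly
where the normalisation `σ = 1 - (1 - μ) ^ M` is needed. Moreover `0 ≤ T n ≤ (1 - ξ) ^ ⌊n / M⌋`,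
so `T n → 0`, and since `π ≥ 0` the tail sums telescope to `T n`.
-/

open Filter Topology

theorem Nat.add_one_div_mod_of_mod_add_one_lt {n M : ℕ} (h : n % M + 1 < M) :
    (n + 1) / M = n / M ∧ (n + 1) % M = n % M + 1 :=
  (Nat.div_mod_unique (by omega)).2 ⟨by have := Nat.mod_add_div n M; omega, h⟩

theorem Nat.add_one_div_mod_of_mod_add_one_eq {n M : ℕ} (h : n % M + 1 = M) :
    (n + 1) / M = n / M + 1 ∧ (n + 1) % M = 0 :=
  (Nat.div_mod_unique (by omega)).2 ⟨by have := Nat.mod_add_div n M; rw [mul_add]; omega, by omega⟩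

theorem hasSum_nat_add_of_eq_sub_succ {f T : ℕ → ℝ} {l : ℝ} (hf : ∀ n, 0 ≤ f n)
    (hfT : ∀ n, f n = T n - T (n + 1)) (hT : Tendsto T atTop (𝓝 l)) (n : ℕ) :
    HasSum (fun k ↦ f (n + k)) (T n - l) := by
  rw [hasSum_iff_tendsto_nat_of_nonneg fun k ↦ hf _]
  have hpartial : ∀ N, ∑ k ∈ Finset.range N, f (n + k) = T n - T (n + N) := fun N ↦ by
    simp only [hfT]
    exact Finset.sum_range_sub' (fun k ↦ T (n + k)) N
  simp only [hpartial]
  have hshift : Tendsto (fun N ↦ T (n + N)) atTop (𝓝 l) := by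
    simpa only [add_comm n] using (tendsto_add_atTop_iff_nat n).2 hT
  exact tendsto_const_nhds.sub hshift

theorem hasSum_subtype_le_iff_nat_add {α : Type*} [AddCommMonoid α] [TopologicalSpace α]
    {f : ℕ → α} {a : α} (n : ℕ) :
    HasSum (fun w : {w : ℕ // n ≤ w} ↦ f w) a ↔ HasSum (fun k ↦ f (n + k)) a := by
  let g : ℕ → {w : ℕ // n ≤ w} := fun k ↦ ⟨n + k, Nat.le_add_right n k⟩
  have hg : Function.Injective g := fun k k' h ↦ by simpa [g] using h
  refine (hg.hasSum_iff fun w hw ↦ absurd ⟨w - n, ?_⟩ hw).symm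
  ext
  simp [g, Nat.add_sub_cancel' w.2]

noncomputable def stationaryDist (M : ℕ) (μ ξ : ℝ) (w : ℕ) : ℝ :=
  ξ * (1 - ξ) ^ (w / M) * μ * (1 - μ) ^ (w % M) / (1 - (1 - μ) ^ M)

noncomputable def stationaryTail (M : ℕ) (μ ξ : ℝ) (n : ℕ) : ℝ :=
  (1 - ξ) ^ (n / M) * (1 - ξ * (1 - (1 - μ) ^ (n % M)) / (1 - (1 - μ) ^ M))

section

variable {M : ℕ} {μ ξ : ℝ}

theorem stationaryDist_eq_sub_succ (hM : 0 < M) (hσ : 1 - (1 - μ) ^ M ≠ 0) (n : ℕ) :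
    stationaryDist M μ ξ n = stationaryTail M μ ξ n - stationaryTail M μ ξ (n + 1) := by
  unfold stationaryDist stationaryTail
  obtain hlt | heq : n % M + 1 < M ∨ n % M + 1 = M := by have := Nat.mod_lt n hM; omega
  · obtain ⟨hdiv, hmod⟩ := Nat.add_one_div_mod_of_mod_add_one_lt hlt
    rw [hdiv, hmod]
    field_simp
    ring
  · obtain ⟨hdiv, hmod⟩ := Nat.add_one_div_mod_of_mod_add_one_eq heq
    have hpow : (1 - μ) ^ M = (1 - μ) ^ (n % M) * (1 - μ) := by rw [← pow_succ, heq]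
    rw [hdiv, hmod, hpow]
    rw [hpow] at hσ
    linear_combination (1 - ξ) ^ (n / M) * ξ * mul_inv_cancel₀ hσ

theorem stationaryDist_nonneg (hμ : μ ∈ Set.Icc 0 1) (hξ : ξ ∈ Set.Icc 0 1) (w : ℕ) :
    0 ≤ stationaryDist M μ ξ w := by
  obtain ⟨hμ0, hμ1⟩ := hμ
  obtain ⟨hξ0, hξ1⟩ := hξ
  have hy0 : 0 ≤ 1 - μ := sub_nonneg.2 hμ1
  have hσ : 0 ≤ 1 - (1 - μ) ^ M := sub_nonneg.2 (pow_le_one₀ hy0 (by linarith))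
  unfold stationaryDist
  have hx0 : 0 ≤ 1 - ξ := sub_nonneg.2 hξ1
  positivity

theorem stationaryTail_mem_Icc (hM : 0 < M) (hμ : μ ∈ Set.Ioc 0 1) (hξ : ξ ∈ Set.Icc 0 1)
    (n : ℕ) : stationaryTail M μ ξ n ∈ Set.Icc 0 ((1 - ξ) ^ (n / M)) := by
  obtain ⟨hμ0, hμ1⟩ := hμ
  obtain ⟨hξ0, hξ1⟩ := hξ
  have hy0 : 0 ≤ 1 - μ := by linarith
  have hy1 : 1 - μ < 1 := by linarith
  have hσ : 0 < 1 - (1 - μ) ^ M := sub_pos.2 (pow_lt_one₀ hy0 hy1 hM.ne')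
  have hratio : (1 - (1 - μ) ^ (n % M)) / (1 - (1 - μ) ^ M) ∈ Set.Icc 0 1 := by
    rw [Set.mem_Icc, div_le_one hσ]
    exact ⟨div_nonneg (sub_nonneg.2 (pow_le_one₀ hy0 hy1.le)) hσ.le,
      sub_le_sub_left (pow_le_pow_of_le_one hy0 hy1.le (Nat.mod_lt n hM).le) 1⟩
  have hfactor : 1 - ξ * (1 - (1 - μ) ^ (n % M)) / (1 - (1 - μ) ^ M) ∈ Set.Icc 0 1 := by
    rw [mul_div_assoc]
    constructor <;> nlinarith [hratio.1, hratio.2]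
  unfold stationaryTail
  exact ⟨mul_nonneg (pow_nonneg (by linarith) _) hfactor.1,
    mul_le_of_le_one_right (pow_nonneg (by linarith) _) hfactor.2⟩

theorem tendsto_stationaryTail (hM : 0 < M) (hμ : μ ∈ Set.Ioc 0 1) (hξ : ξ ∈ Set.Ioc 0 1) :
    Tendsto (stationaryTail M μ ξ) atTop (𝓝 0) := by
  have hgeom : Tendsto (fun n ↦ (1 - ξ) ^ (n / M)) atTop (𝓝 0) :=
    (tendsto_pow_atTop_nhds_zero_of_lt_one (by linarith [hξ.2]) (by linarith [hξ.1])).comp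
      (Nat.tendsto_div_const_atTop hM.ne')
  have hbound n := stationaryTail_mem_Icc hM hμ (Set.Ioc_subset_Icc_self hξ) n
  exact squeeze_zero (fun n ↦ (hbound n).1) (fun n ↦ (hbound n).2) hgeom

theorem hasSum_stationaryDist_subtype_le (hM : 0 < M) (hμ : μ ∈ Set.Ioc 0 1)
    (hξ : ξ ∈ Set.Ioc 0 1) (n : ℕ) :
    HasSum (fun w : {w : ℕ // n ≤ w} ↦ stationaryDist M μ ξ w) (stationaryTail M μ ξ n) := by
  have hσ : 1 - (1 - μ) ^ M ≠ 0 :=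
    sub_ne_zero.2 (pow_lt_one₀ (by linarith [hμ.2]) (by linarith [hμ.1]) hM.ne').ne'
  rw [hasSum_subtype_le_iff_nat_add, ← sub_zero (stationaryTail M μ ξ n)]
  exact hasSum_nat_add_of_eq_sub_succ
    (stationaryDist_nonneg (Set.Ioc_subset_Icc_self hμ) (Set.Ioc_subset_Icc_self hξ))
    (stationaryDist_eq_sub_succ hM hσ) (tendsto_stationaryTail hM hμ hξ) n

end

/-- Closed form for the tails of the steady-state distribution. -/
theorem stmt_7 (M : ℕ) (hM : 1 ≤ M) (μ ξ : ℝ)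
    (hμ : μ ∈ Set.Ioo (0 : ℝ) 1) (hξ : ξ ∈ Set.Ioo (0 : ℝ) 1)
    (σ : ℝ) (hσ : σ = 1 - (1 - μ) ^ M)
    (π : ℕ → ℝ)
    (hπ : ∀ w, π w = ξ * (1 - ξ) ^ (w / M) * μ * (1 - μ) ^ (w % M) / σ) :
    ∀ n : ℕ, ∑' w : {w : ℕ // n ≤ w}, π w =
      (1 - ξ) ^ (n / M) * (1 - ξ * (1 - (1 - μ) ^ (n % M)) / σ) := by
  subst hσ
  obtain rfl : π = stationaryDist M μ ξ := funext hπ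
  exact fun n ↦ (hasSum_stationaryDist_subtype_le hM (Set.Ioo_subset_Ioc_self hμ)
    (Set.Ioo_subset_Ioc_self hξ) n).tsum_eq
end

section
/- (Proposition 2, steady-state form.) Let θ ∈ ℤ, and define the age-violation probability at threshold θ as ζ(θ) = Σ'_{w ∈ ℕ, w + 2M + 1 > θ} π w, the steady-state probability that the AoI at a frame end, namely Ω + 2M + 1 with Ω distributed as π, exceeds θ. Then ζ(θ) = (1-ξ)^{⌊(θ-2M)/M⌋} · (1 - ξ·(1-(1-μ)^{(θ-2M) mod M})/σ) if θ > 2M, and ζ(θ) = 1 if θ ≤ 2M. -/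
/-!
Write `T t` for the claimed closed form, read with `t = (θ - 2M)⁺`. It telescopes against the
distribution, `T t - T (t + 1) = π t`: inside a block of `M` slots only the factor `(1 - μ)^(t % M)`
moves, and at a block boundary the two readings `(1 - ξ)^q · (1 - ξ)` and `(1 - ξ)^(q + 1) · 1`
agree. Since `T 0 = 1` and `T t → 0`, `T t` is the tail `∑_{w ≥ t} π w`, and the violation event
`w + 2M + 1 > θ` is exactly `w ≥ t`.
-/

open Filter Topology Finset

theorem Antitone.hasSum_sub_succ {f : ℕ → ℝ} (hf : Antitone f) (hlim : Tendsto f atTop (𝓝 0)) :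
    HasSum (fun n => f n - f (n + 1)) (f 0) := by
  rw [hasSum_iff_tendsto_nat_of_nonneg fun n => sub_nonneg.2 (hf n.le_succ)]
  simp_rw [Finset.sum_range_sub']
  simpa using hlim.const_sub (f 0)

theorem tendsto_pow_div_mul_mod {a : ℝ} (ha : |a| < 1) {M : ℕ} (hM : 0 < M) (c : ℕ → ℝ) :
    Tendsto (fun t => a ^ (t / M) * c (t % M)) atTop (𝓝 0) := by
  refine Tendsto.zero_mul_isBoundedUnder_le
    ((tendsto_pow_atTop_nhds_zero_of_abs_lt_one ha).comp (Nat.tendsto_div_const_atTop hM.ne')) ?_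
  refine isBoundedUnder_of ⟨∑ r ∈ range M, ‖c r‖, fun t => ?_⟩
  exact Finset.single_le_sum (fun r _ => norm_nonneg (c r)) (mem_range.2 (Nat.mod_lt t hM))

noncomputable section

section AgeOfInformation

variable {M : ℕ} {μ ξ : ℝ}

variable (M μ ξ) in
def ageDist (w : ℕ) : ℝ :=
  ξ * (1 - ξ) ^ (w / M) * μ * (1 - μ) ^ (w % M) / (1 - (1 - μ) ^ M)

variable (M μ ξ) in
def ageTail (t : ℕ) : ℝ :=
  (1 - ξ) ^ (t / M) * (1 - ξ * (1 - (1 - μ) ^ (t % M)) / (1 - (1 - μ) ^ M))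

@[simp]
theorem ageTail_zero : ageTail M μ ξ 0 = 1 := by
  simp [ageTail]

theorem ageDist_nonneg (hμ : μ ∈ Set.Icc 0 1) (hξ : ξ ∈ Set.Icc 0 1) (w : ℕ) :
    0 ≤ ageDist M μ ξ w := by
  obtain ⟨hμ0, hμ1⟩ := hμ
  obtain ⟨hξ0, hξ1⟩ := hξ
  have hσ : 0 ≤ 1 - (1 - μ) ^ M := sub_nonneg.2 (pow_le_one₀ (by linarith) (by linarith))
  unfold ageDist
  have : 0 ≤ 1 - ξ := by linarith
  have : 0 ≤ 1 - μ := by linarith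
  positivity

theorem ageTail_sub_ageTail_succ (hM : 0 < M) (hσ : 1 - (1 - μ) ^ M ≠ 0) (t : ℕ) :
    ageTail M μ ξ t - ageTail M μ ξ (t + 1) = ageDist M μ ξ t := by
  obtain ⟨q, r, hr, rfl⟩ : ∃ q r, r < M ∧ t = M * q + r :=
    ⟨t / M, t % M, Nat.mod_lt t hM, (Nat.div_add_mod t M).symm⟩
  have hdiv : ∀ {q r : ℕ}, r < M → (M * q + r) / M = q := fun hr => by
    rw [Nat.mul_add_div hM, Nat.div_eq_of_lt hr, add_zero]
  have hmod : ∀ {q r : ℕ}, r < M → (M * q + r) % M = r := fun hr => by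
    rw [Nat.mul_add_mod, Nat.mod_eq_of_lt hr]
  unfold ageTail ageDist
  rw [hdiv hr, hmod hr]
  rcases (show r + 1 ≤ M from hr).lt_or_eq with hr1 | rfl
  · rw [add_assoc, hdiv hr1, hmod hr1]
    field_simp
    ring
  · have hnext : (r + 1) * q + r + 1 = (r + 1) * (q + 1) + 0 := by ring
    rw [hnext, hdiv (Nat.succ_pos r), hmod (Nat.succ_pos r)]
    field_simp
    ring

theorem hasSum_ageDist_nat_add (hM : 0 < M) (hμ : μ ∈ Set.Ioo 0 1) (hξ : ξ ∈ Set.Ioo 0 1)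
    (k : ℕ) : HasSum (fun n => ageDist M μ ξ (n + k)) (ageTail M μ ξ k) := by
  have hσ : 1 - (1 - μ) ^ M ≠ 0 :=
    (sub_pos.2 (pow_lt_one₀ (by linarith [hμ.2]) (by linarith [hμ.1]) hM.ne')).ne'
  have hstep := ageTail_sub_ageTail_succ (ξ := ξ) hM hσ
  have hanti : Antitone (ageTail M μ ξ) := antitone_nat_of_succ_le fun t => by
    linarith [hstep t, ageDist_nonneg (M := M) (Set.Ioo_subset_Icc_self hμ)
      (Set.Ioo_subset_Icc_self hξ) t]
  have hlim : Tendsto (ageTail M μ ξ) atTop (𝓝 0) :=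
    tendsto_pow_div_mul_mod (a := 1 - ξ) (abs_lt.2 ⟨by linarith [hξ.2], by linarith [hξ.1]⟩) hM
      fun r => 1 - ξ * (1 - (1 - μ) ^ r) / (1 - (1 - μ) ^ M)
  have := (hanti.comp_monotone (add_left_mono (a := k))).hasSum_sub_succ
    (hlim.comp (tendsto_add_atTop_nat k))
  simpa only [Function.comp_def, add_right_comm _ 1 k, hstep, zero_add] using this

end AgeOfInformation

end

/-- Proposition 2, steady-state form: closed form of the age-violation
probability `ζ(θ) = ∑'_{w : w + 2M + 1 > θ} π w`. -/
theorem stmt_8 (M : ℕ) (hM : 1 ≤ M) (μ ξ : ℝ)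
    (hμ : μ ∈ Set.Ioo (0 : ℝ) 1) (hξ : ξ ∈ Set.Ioo (0 : ℝ) 1)
    (σ : ℝ) (hσ : σ = 1 - (1 - μ) ^ M)
    (π : ℕ → ℝ)
    (hπ : ∀ w, π w = ξ * (1 - ξ) ^ (w / M) * μ * (1 - μ) ^ (w % M) / σ)
    (θ : ℤ) :
    (2 * (M : ℤ) < θ →
      ∑' w : {w : ℕ // θ < (w : ℤ) + 2 * M + 1}, π w =
        (1 - ξ) ^ ((θ - 2 * M).toNat / M) *
          (1 - ξ * (1 - (1 - μ) ^ ((θ - 2 * M).toNat % M)) / σ)) ∧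
    (θ ≤ 2 * (M : ℤ) →
      ∑' w : {w : ℕ // θ < (w : ℤ) + 2 * M + 1}, π w = 1) := by
  subst hσ
  obtain rfl : π = ageDist M μ ξ := funext hπ
  let e : ℕ ≃ {w : ℕ // θ < (w : ℤ) + 2 * M + 1} :=
    (notMemRangeEquiv (θ - 2 * M).toNat).symm.trans
      (Equiv.subtypeEquivRight fun w => by simp only [mem_range]; omega)
  have hviol : HasSum (fun w : {w : ℕ // θ < (w : ℤ) + 2 * M + 1} => ageDist M μ ξ w)
      (ageTail M μ ξ (θ - 2 * M).toNat) :=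
    e.hasSum_iff.1 (hasSum_ageDist_nat_add hM hμ hξ _)
  refine ⟨fun _ => hviol.tsum_eq, fun hθ => ?_⟩
  rw [hviol.tsum_eq, Int.toNat_eq_zero.2 (by omega), ageTail_zero]
end

section
/- (Proposition 2, limit form.) For every initial state n₀ ∈ ℕ and every integer θ > 2M, the probability that the AoI at the end of frame j exceeds θ converges, as j → ∞, to the age-violation probability: lim_{j→∞} Σ'_{w ∈ ℕ, w + 2M + 1 > θ} Q j n₀ w = (1-ξ)^{⌊(θ-2M)/M⌋} · (1 - ξ·(1-(1-μ)^{(θ-2M) mod M})/σ). -/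
/-- Proposition 2, limit form: the probability that the AoI at the end of
frame `j` exceeds `θ` converges to the age-violation probability. -/
theorem stmt_9 (M : ℕ) (hM : 1 ≤ M) (μ ξ : ℝ)
    (hμ : μ ∈ Set.Ioo (0 : ℝ) 1) (hξ : ξ ∈ Set.Ioo (0 : ℝ) 1)
    (σ : ℝ) (hσ : σ = 1 - (1 - μ) ^ M)
    (q : ℕ → ℕ → ℝ)
    (hq : ∀ n₁ n₂, q n₁ n₂ =
      if n₂ ≤ M - 1 then ξ * μ * (1 - μ) ^ n₂ / σ
      else if n₂ = n₁ + M then 1 - ξ else 0)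
    (Q : ℕ → ℕ → ℕ → ℝ)
    (hQ0 : ∀ a c, Q 0 a c = if a = c then 1 else 0)
    (hQs : ∀ j a c, Q (j + 1) a c = ∑' b : ℕ, Q j a b * q b c) :
    ∀ n₀ : ℕ, ∀ θ : ℤ, 2 * (M : ℤ) < θ →
      Filter.Tendsto
        (fun j => ∑' w : {w : ℕ // θ < (w : ℤ) + 2 * M + 1}, Q j n₀ w)
        Filter.atTop
        (nhds ((1 - ξ) ^ ((θ - 2 * M).toNat / M) *
          (1 - ξ * (1 - (1 - μ) ^ ((θ - 2 * M).toNat % M)) / σ))) := by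
  classical
  obtain ⟨hμ0, hμ1⟩ := hμ
  obtain ⟨hξ0, hξ1⟩ := hξ
  have hMpos : 0 < M := hM
  have hσpos : 0 < σ := by
    have : (1 - μ) ^ M < 1 := pow_lt_one₀ (by linarith) (by linarith) (by omega)
    rw [hσ]; linarith
  have hσ0 : σ ≠ 0 := ne_of_gt hσpos
  intro n₀ θ hθ
  set t : ℕ := (θ - 2 * M).toNat with ht
  have htθ : (t : ℤ) = θ - 2 * M := Int.toNat_of_nonneg (by omega)
  have ht1 : 1 ≤ t := by omega
  -- the stationary-type weight function
  set g : ℕ → ℝ := fun w => ξ * (1 - ξ) ^ (w / M) * (μ * (1 - μ) ^ (w % M) / σ)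
    with hgdef
  have geo : ∀ n, ∑ r ∈ Finset.range n, μ * (1 - μ) ^ r = 1 - (1 - μ) ^ n := by
    intro n
    induction n with
    | zero => simp
    | succ n ih => rw [Finset.sum_range_succ, ih]; ring
  have gblock : ∀ k n, n < M → g (k * M + n) = ξ * (1 - ξ) ^ k * (μ * (1 - μ) ^ n / σ) := by
    intro k n hn
    have h1 : (k * M + n) / M = k := by
      rw [Nat.add_comm, Nat.add_mul_div_right _ _ hMpos, Nat.div_eq_of_lt hn, Nat.zero_add]
    have h2 : (k * M + n) % M = n := by
      rw [Nat.add_comm, Nat.add_mul_mod_self_right, Nat.mod_eq_of_lt hn]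
    simp only [hgdef, h1, h2]
  have gshift : ∀ d, g (d + M) = (1 - ξ) * g d := by
    intro d
    have h1 : (d + M) / M = d / M + 1 := Nat.add_div_right d hMpos
    have h2 : (d + M) % M = d % M := Nat.add_mod_right d M
    simp only [hgdef, h1, h2]
    ring
  -- partial sums of g
  set G : ℕ → ℝ := fun n => ∑ w ∈ Finset.range n, g w with hGdef
  have hblocksum : ∀ k n, n ≤ M →
      ∑ x ∈ Finset.range n, g (k * M + x) = ξ * (1 - ξ) ^ k * ((1 - (1 - μ) ^ n) / σ) := by
    intro k n hn
    have : ∀ x ∈ Finset.range n, g (k * M + x) = ξ * (1 - ξ) ^ k * (μ * (1 - μ) ^ x / σ) := by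
      intro x hx
      exact gblock k x (lt_of_lt_of_le (Finset.mem_range.mp hx) hn)
    rw [Finset.sum_congr rfl this]
    have : ∑ x ∈ Finset.range n, ξ * (1 - ξ) ^ k * (μ * (1 - μ) ^ x / σ)
        = ξ * (1 - ξ) ^ k / σ * ∑ x ∈ Finset.range n, μ * (1 - μ) ^ x := by
      rw [Finset.mul_sum]
      exact Finset.sum_congr rfl fun x _ => by ring
    rw [this, geo]
    ring
  have hGM : ∀ k, G (k * M) = 1 - (1 - ξ) ^ k := by
    intro k
    induction k with
    | zero => simp [hGdef]
    | succ k ih =>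
      have hkM : (k + 1) * M = k * M + M := by ring
      have : G ((k + 1) * M) = G (k * M) + ∑ x ∈ Finset.range M, g (k * M + x) := by
        simp only [hGdef, hkM]
        exact Finset.sum_range_add g (k * M) M
      rw [this, ih, hblocksum k M le_rfl]
      rw [hσ]
      have hσ' : (1 - (1 - μ) ^ M) / (1 - (1 - μ) ^ M) = 1 := by
        rw [div_self]; rw [hσ] at hσ0; exact hσ0
      rw [hσ']
      ring
  -- the key value
  have hGt : 1 - G t = (1 - ξ) ^ (t / M) * (1 - ξ * (1 - (1 - μ) ^ (t % M)) / σ) := by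
    obtain ⟨a, b, hab, hbM⟩ : ∃ a b, t = a * M + b ∧ b < M :=
      ⟨t / M, t % M, by rw [Nat.mul_comm]; exact (Nat.div_add_mod t M).symm,
        Nat.mod_lt t hMpos⟩
    have ha : t / M = a := by
      rw [hab, Nat.add_comm, Nat.add_mul_div_right _ _ hMpos, Nat.div_eq_of_lt hbM,
        Nat.zero_add]
    have hb : t % M = b := by
      rw [hab, Nat.add_comm, Nat.add_mul_mod_self_right, Nat.mod_eq_of_lt hbM]
    rw [ha, hb]
    have hsplit : G t = G (a * M) + ∑ x ∈ Finset.range b, g (a * M + x) := by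
      simp only [hGdef, hab]
      exact Finset.sum_range_add g (a * M) b
    rw [hsplit, hGM, hblocksum a b (le_of_lt hbM)]
    field_simp
    ring
  -- explicit formula for Q
  set F : ℕ → ℕ → ℝ := fun j w =>
    (if w < j * M then g w else 0) + (if w = n₀ + j * M then (1 - ξ) ^ j else 0) with hFdef
  have hFzero : ∀ j w, n₀ + j * M < w → F j w = 0 := by
    intro j w hw
    simp only [hFdef]
    rw [if_neg (by omega), if_neg (by omega)]
    ring
  have hFtsum : ∀ (j : ℕ) (h : ℕ → ℝ),
      ∑' b, F j b * h b = ∑ b ∈ Finset.range (n₀ + j * M + 1), F j b * h b := by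
    intro j h
    apply tsum_eq_sum
    intro b hb
    rw [hFzero j b (by simpa [Finset.mem_range] using hb), zero_mul]
  have hsum_filter_lt : ∀ (N n : ℕ), n ≤ N →
      ∑ b ∈ Finset.range N, (if b < n then g b else 0) = G n := by
    intro N n hn
    rw [← Finset.sum_filter]
    simp only [hGdef]
    congr 1
    ext x
    simp only [Finset.mem_filter, Finset.mem_range]
    omega
  have hFmass : ∀ j, ∑ b ∈ Finset.range (n₀ + j * M + 1), F j b = 1 := by
    intro j
    simp only [hFdef]
    rw [Finset.sum_add_distrib]
    rw [hsum_filter_lt _ _ (by omega), hGM j]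
    rw [Finset.sum_ite_eq' (Finset.range (n₀ + j * M + 1)) (n₀ + j * M)]
    rw [if_pos (Finset.mem_range.mpr (by omega))]
    ring
  have hF : ∀ j w, Q j n₀ w = F j w := by
    intro j
    induction j with
    | zero =>
      intro w
      rw [hQ0]
      simp only [hFdef, Nat.zero_mul, Nat.not_lt_zero, if_false, pow_zero, Nat.zero_mul,
        Nat.add_zero]
      by_cases hw : n₀ = w
      · rw [if_pos hw, if_pos hw.symm]; ring
      · rw [if_neg hw, if_neg (fun h => hw h.symm)]; ring
    | succ j ih =>
      intro c
      rw [hQs]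
      have hrw : ∀ b : ℕ, Q j n₀ b * q b c = F j b * q b c := fun b => by rw [ih b]
      rw [tsum_congr hrw]
      by_cases hc : c < M
      · -- refresh case
        have hq' : ∀ b, q b c = ξ * μ * (1 - μ) ^ c / σ := by
          intro b
          rw [hq, if_pos (by omega)]
        have : ∀ b : ℕ, F j b * q b c = F j b * (ξ * μ * (1 - μ) ^ c / σ) := fun b => by
          rw [hq' b]
        rw [tsum_congr this, tsum_mul_right]
        have hts : ∑' b, F j b = 1 := by
          have := hFtsum j (fun _ => 1)
          simpa [hFmass j] using this
        rw [hts, one_mul]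
        have hgc : g c = ξ * μ * (1 - μ) ^ c / σ := by
          have := gblock 0 c hc
          simpa using this.trans (by ring)
        simp only [hFdef]
        rw [if_pos (by nlinarith [Nat.one_le_iff_ne_zero.mp hM] : c < (j+1) * M),
          if_neg (by nlinarith : ¬ c = n₀ + (j+1) * M), hgc]
        ring
      · -- deterministic step case
        push_neg at hc
        obtain ⟨d, rfl⟩ : ∃ d, c = d + M := ⟨c - M, by omega⟩
        have hq' : ∀ b, q b (d + M) = if b = d then 1 - ξ else 0 := by
          intro b
          rw [hq, if_neg (by omega)]
          by_cases hb : b = d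
          · rw [if_pos (by omega), if_pos hb]
          · rw [if_neg (by omega), if_neg hb]
        have hsingle : ∑' b, F j b * q b (d + M) = F j d * (1 - ξ) := by
          rw [tsum_eq_single d]
          · rw [hq' d, if_pos rfl]
          · intro b hb
            rw [hq' b, if_neg hb, mul_zero]
        rw [hsingle]
        simp only [hFdef]
        have e1 : (d + M < (j + 1) * M) ↔ (d < j * M) := by
          constructor <;> intro h <;> nlinarith
        have e2 : (d + M = n₀ + (j + 1) * M) ↔ (d = n₀ + j * M) := by
          constructor <;> intro h <;> nlinarith
        rw [add_mul]
        congr 1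
        · by_cases h1 : d < j * M
          · rw [if_pos h1, if_pos (e1.mpr h1), gshift d]; ring
          · rw [if_neg h1, if_neg (fun h => h1 (e1.mp h)), zero_mul]
        · by_cases h2 : d = n₀ + j * M
          · rw [if_pos h2, if_pos (e2.mpr h2), pow_succ]
          · rw [if_neg h2, if_neg (fun h => h2 (e2.mp h)), zero_mul]
  -- the tail sum is eventually constant
  apply tendsto_atTop_of_eventually_const (i₀ := t + 1)
  intro j hj
  have hjt : t < j := by omega
  have hjM : t < j * M := by
    calc t < j := hjt
    _ ≤ j * M := Nat.le_mul_of_pos_right j hMpos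
  have htn : t ≤ n₀ + j * M := by omega
  have hmem : ∀ w : ℕ, (θ < (w : ℤ) + 2 * M + 1) ↔ t ≤ w := by
    intro w
    omega
  have hsub : ∑' w : {w : ℕ // θ < (w : ℤ) + 2 * M + 1}, Q j n₀ w
      = ∑' w : ℕ, Set.indicator {w : ℕ | θ < (w : ℤ) + 2 * M + 1} (Q j n₀) w :=
    tsum_subtype _ _
  rw [hsub]
  have hind : ∀ w : ℕ, Set.indicator {w : ℕ | θ < (w : ℤ) + 2 * M + 1} (Q j n₀) w
      = if t ≤ w then F j w else 0 := by
    intro w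
    by_cases hw : t ≤ w
    · rw [Set.indicator_of_mem (by simpa [Set.mem_setOf_eq] using (hmem w).mpr hw),
        if_pos hw, hF]
    · rw [Set.indicator_of_notMem (fun h => hw ((hmem w).mp (by simpa [Set.mem_setOf_eq] using h))),
        if_neg hw]
  rw [tsum_congr hind]
  rw [tsum_eq_sum (s := Finset.range (n₀ + j * M + 1)) (by
    intro b hb
    rw [Finset.mem_range] at hb
    by_cases hbt : t ≤ b
    · rw [if_pos hbt, hFzero j b (by omega)]
    · rw [if_neg hbt])]
  have hsplit : ∀ w ∈ Finset.range (n₀ + j * M + 1),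
      (if t ≤ w then F j w else 0)
      = (if t ≤ w ∧ w < j * M then g w else 0)
        + (if w = n₀ + j * M then (1 - ξ) ^ j else 0) := by
    intro w _
    simp only [hFdef]
    by_cases hw : t ≤ w
    · rw [if_pos hw]
      congr 1
      · by_cases h1 : w < j * M
        · rw [if_pos h1, if_pos ⟨hw, h1⟩]
        · rw [if_neg h1, if_neg (fun h => h1 h.2)]
    · rw [if_neg hw]
      rw [if_neg (fun h => hw h.1), if_neg (fun h => hw (by rw [h]; exact htn))]
      ring
  rw [Finset.sum_congr rfl hsplit, Finset.sum_add_distrib]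
  have hIco : ∑ w ∈ Finset.range (n₀ + j * M + 1), (if t ≤ w ∧ w < j * M then g w else 0)
      = G (j * M) - G t := by
    rw [← Finset.sum_filter]
    have : Finset.filter (fun w => t ≤ w ∧ w < j * M) (Finset.range (n₀ + j * M + 1))
        = Finset.Ico t (j * M) := by
      ext x
      simp only [Finset.mem_filter, Finset.mem_range, Finset.mem_Ico]
      omega
    rw [this]
    exact Finset.sum_Ico_eq_sub g (le_of_lt hjM)
  rw [hIco]
  rw [Finset.sum_ite_eq' (Finset.range (n₀ + j * M + 1)) (n₀ + j * M),
    if_pos (Finset.mem_range.mpr (by omega))]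
  rw [hGM j]
  have : 1 - (1 - ξ) ^ j - G t + (1 - ξ) ^ j = 1 - G t := by ring
  rw [this, hGt]
end

section
/- The age-violation probability is strictly decreasing in the reset probability: for every integer n ≥ 1, the function ξ ↦ (1-ξ)^{⌊n/M⌋} · (1 - ξ·(1-(1-μ)^{n mod M})/σ) is strictly decreasing on the interval (0,1). -/
/-! With `t = (1 - (1-μ)^(n mod M)) / σ ∈ [0,1]` the function is `(1-ξ)^⌊n/M⌋ · (1 - ξ t)`, a
product of two positive non-increasing factors on `ξ < 1`. The first is strictly decreasing
when `⌊n/M⌋ ≥ 1`; otherwise `n mod M = n ≥ 1`, so `t > 0` and the second one is. -/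

open Set

theorem strictAntiOn_one_sub_pow_mul_one_sub_mul {k : ℕ} {t : ℝ} (ht₀ : 0 ≤ t) (ht₁ : t ≤ 1)
    (hkt : 0 < k ∨ 0 < t) :
    StrictAntiOn (fun ξ : ℝ => (1 - ξ) ^ k * (1 - ξ * t)) (Iio 1) := by
  intro a ha b hb hab
  simp only [mem_Iio] at ha hb
  have hbt : 0 < 1 - b * t := by
    rcases ht₀.eq_or_lt with rfl | ht₀
    · simp
    · nlinarith
  rcases hkt with hk | ht
  · have hpow : (1 - b) ^ k < (1 - a) ^ k :=
      pow_lt_pow_left₀ (by linarith) (by linarith) hk.ne'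
    exact mul_lt_mul hpow (by nlinarith) hbt (by positivity)
  · have hlin : 1 - b * t < 1 - a * t := by nlinarith
    exact mul_lt_mul' (pow_le_pow_left₀ (by linarith) (by linarith) k) hlin hbt.le
      (pow_pos (by linarith) k)

theorem one_sub_pow_div_one_sub_pow_le_one {x : ℝ} (hx₀ : 0 ≤ x) (hx₁ : x ≤ 1) {r M : ℕ}
    (hrM : r ≤ M) (hM : x ^ M < 1) :
    (1 - x ^ r) / (1 - x ^ M) ≤ 1 := by
  rw [div_le_one (by linarith)]
  linarith [pow_le_pow_of_le_one hx₀ hx₁ hrM]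

/-- The age-violation probability is strictly decreasing in the reset
probability `ξ` on `(0,1)`. -/
theorem stmt_10 (M : ℕ) (hM : 1 ≤ M) (μ : ℝ)
    (hμ : μ ∈ Set.Ioo (0 : ℝ) 1)
    (σ : ℝ) (hσ : σ = 1 - (1 - μ) ^ M)
    (n : ℕ) (hn : 1 ≤ n) :
    StrictAntiOn
      (fun ξ : ℝ => (1 - ξ) ^ (n / M) * (1 - ξ * (1 - (1 - μ) ^ (n % M)) / σ))
      (Set.Ioo (0 : ℝ) 1) := by
  obtain ⟨hμ₀, hμ₁⟩ := hμ
  have one_sub_pow_pos : ∀ {j : ℕ}, j ≠ 0 → 0 < 1 - (1 - μ) ^ j := fun hj =>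
    sub_pos.mpr (pow_lt_one₀ (by linarith) (by linarith) hj)
  have hσ₀ : 0 < σ := hσ ▸ one_sub_pow_pos (by omega)
  have hkt : 0 < n / M ∨ 0 < (1 - (1 - μ) ^ (n % M)) / σ := by
    rcases Nat.eq_zero_or_pos (n / M) with hk | hk
    · rw [Nat.mod_eq_of_lt ((Nat.div_eq_zero_iff_lt (by omega)).mp hk)]
      exact .inr (div_pos (one_sub_pow_pos (by omega)) hσ₀)
    · exact .inl hk
  simp only [mul_div_assoc]
  refine (strictAntiOn_one_sub_pow_mul_one_sub_mul ?_ ?_ hkt).mono Ioo_subset_Iio_self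
  · exact div_nonneg (sub_nonneg.mpr (pow_le_one₀ (by linarith) (by linarith))) hσ₀.le
  · exact hσ ▸ one_sub_pow_div_one_sub_pow_le_one (by linarith) (by linarith)
      (Nat.mod_lt n (by omega)).le (by linarith [hσ])
end

section
/- Density-evolution threshold condition: if ν > 1 - exp(-G·L̇(ν)) for every ν ∈ (0,1], then the density-evolution sequence converges to zero, lim_{i→∞} η_i = 0; consequently, for every degree ℓ ≥ 1 the asymptotic unresolved-user probability P_{ℓ,DE} = lim_{i→∞} (η_i)^ℓ equals 0. -/
set_option maxHeartbeats 1000000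


/-- Density-evolution threshold condition: if `ν > 1 - exp(-G·L̇(ν))` for
every `ν ∈ (0,1]`, then the density-evolution sequence converges to zero and
so does `(η i)^ℓ` for every degree `ℓ ≥ 1`. -/
theorem stmt_14 (d : ℕ) (hd : 1 ≤ d) (Λ : ℕ → ℝ) (hΛ : ∀ ℓ, 0 ≤ Λ ℓ)
    (G : ℝ) (hG : 0 < G)
    (Ldot : ℝ → ℝ)
    (hL : ∀ x, Ldot x = ∑ ℓ ∈ Finset.Icc 1 d, (ℓ : ℝ) * Λ ℓ * x ^ (ℓ - 1))
    (η : ℕ → ℝ) (hη0 : η 0 = 1)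
    (hηs : ∀ i, η (i + 1) = 1 - Real.exp (-(G * Ldot (η i))))
    (hthr : ∀ ν ∈ Set.Ioc (0 : ℝ) 1, 1 - Real.exp (-(G * Ldot ν)) < ν) :
    Filter.Tendsto η Filter.atTop (nhds 0) ∧
    ∀ ℓ : ℕ, 1 ≤ ℓ →
      Filter.Tendsto (fun i => (η i) ^ ℓ) Filter.atTop (nhds 0) := by
  have hLnn : ∀ x : ℝ, 0 ≤ x → 0 ≤ Ldot x := by
    intro x hx
    rw [hL]
    apply Finset.sum_nonneg
    intro ℓ _
    exact mul_nonneg (mul_nonneg (Nat.cast_nonneg _) (hΛ ℓ)) (pow_nonneg hx _)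
  have hLmono : ∀ x y : ℝ, 0 ≤ x → x ≤ y → Ldot x ≤ Ldot y := by
    intro x y hx hxy
    rw [hL, hL]
    apply Finset.sum_le_sum
    intro ℓ _
    exact mul_le_mul_of_nonneg_left (pow_le_pow_left₀ hx hxy _)
      (mul_nonneg (Nat.cast_nonneg _) (hΛ ℓ))
  have hfnn : ∀ x : ℝ, 0 ≤ x → 0 ≤ 1 - Real.exp (-(G * Ldot x)) := by
    intro x hx
    have h1 : Real.exp (-(G * Ldot x)) ≤ 1 := by
      rw [Real.exp_le_one_iff]
      have := hLnn x hx
      nlinarith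
    linarith
  have hflt1 : ∀ x : ℝ, 1 - Real.exp (-(G * Ldot x)) < 1 := by
    intro x
    have := Real.exp_pos (-(G * Ldot x))
    linarith
  have hfmono : ∀ x y : ℝ, 0 ≤ x → x ≤ y →
      1 - Real.exp (-(G * Ldot x)) ≤ 1 - Real.exp (-(G * Ldot y)) := by
    intro x y hx hxy
    have h := hLmono x y hx hxy
    have : Real.exp (-(G * Ldot y)) ≤ Real.exp (-(G * Ldot x)) := by
      apply Real.exp_le_exp.mpr
      nlinarith
    linarith
  have hmem : ∀ i, 0 ≤ η i ∧ η i ≤ 1 := by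
    intro i
    induction i with
    | zero => simp [hη0]
    | succ n ih =>
      rw [hηs n]
      exact ⟨hfnn _ ih.1, le_of_lt (hflt1 _)⟩
  have hanti : ∀ i, η (i + 1) ≤ η i := by
    intro i
    induction i with
    | zero =>
      rw [hηs 0, hη0]
      exact le_of_lt (hflt1 _)
    | succ n ih =>
      calc η (n + 1 + 1) = 1 - Real.exp (-(G * Ldot (η (n+1)))) := hηs (n+1)
        _ ≤ 1 - Real.exp (-(G * Ldot (η n))) := hfmono (η (n+1)) (η n) (hmem (n+1)).1 ih
        _ = η (n + 1) := (hηs n).symm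
  have hanti' : Antitone η := antitone_nat_of_succ_le hanti
  have hbdd : BddBelow (Set.range η) := ⟨0, by rintro _ ⟨i, rfl⟩; exact (hmem i).1⟩
  set L := ⨅ i, η i with hLdef
  have hconv : Filter.Tendsto η Filter.atTop (nhds L) :=
    tendsto_atTop_ciInf hanti' hbdd
  have hL0 : 0 ≤ L := le_ciInf fun i => (hmem i).1
  have hL1 : L ≤ 1 := le_trans (ciInf_le hbdd 0) (by rw [hη0])
  have hLc : Continuous Ldot := by
    have : Ldot = fun x => ∑ ℓ ∈ Finset.Icc 1 d, (ℓ : ℝ) * Λ ℓ * x ^ (ℓ - 1) := funext hL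
    rw [this]
    exact continuous_finset_sum _ fun ℓ _ => continuous_const.mul (continuous_pow _)
  have hfc : Continuous fun x => 1 - Real.exp (-(G * Ldot x)) :=
    continuous_const.sub (Real.continuous_exp.comp ((continuous_const.mul hLc).neg))
  have hfix : 1 - Real.exp (-(G * Ldot L)) = L := by
    have h1 : Filter.Tendsto (fun i => 1 - Real.exp (-(G * Ldot (η i)))) Filter.atTop
        (nhds (1 - Real.exp (-(G * Ldot L)))) := (hfc.continuousAt.tendsto).comp hconv
    have h2 : Filter.Tendsto (fun i => 1 - Real.exp (-(G * Ldot (η i)))) Filter.atTop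
        (nhds L) := by
      have heq : (fun i => 1 - Real.exp (-(G * Ldot (η i)))) = fun i => η (i + 1) := by
        funext i; rw [hηs i]
      rw [heq]
      exact hconv.comp (Filter.tendsto_add_atTop_nat 1)
    exact tendsto_nhds_unique h1 h2
  have hLzero : L = 0 := by
    by_contra h
    have hLpos : 0 < L := lt_of_le_of_ne hL0 (Ne.symm h)
    have := hthr L ⟨hLpos, hL1⟩
    rw [hfix] at this
    exact lt_irrefl _ this
  rw [hLzero] at hconv
  refine ⟨hconv, fun ℓ hℓ => ?_⟩
  have := hconv.pow ℓ
  rwa [zero_pow (by omega : ℓ ≠ 0)] at this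
end
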